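/- arXiv:2509.21423 — 4 statements merged into one kernel-verified Lean document; each statement's English description precedes it below -/
import Mathlib

section
/- Let X_1, ..., X_M be i.i.d. from a categorical distribution p on [k], and let L(p̂) be the empirical normalized marginal benefit. Then for every ε ∈ (0,1), with probability at least 1 - ε, |L(p̂) - L(p)| ≤ 1/M + sqrt((2/M) log(2/ε)). -/
open scoped Classical
open Real Finset


lemma N_pos {q : ℝ} (h0 : 0 ≤ q) (h1 : q ≤ 1) (x : ℝ) :
    0 < 1 - q + q * Real.exp x := by
  rcases eq_or_lt_of_le h0 with h | h
  · simp [← h]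
  · nlinarith [Real.exp_pos x]

lemma hoeffding_core {q : ℝ} (h0 : 0 ≤ q) (h1 : q ≤ 1) (h : ℝ) :
    (1 - q) * Real.exp (-(q * h)) + q * Real.exp ((1 - q) * h) ≤ Real.exp (h ^ 2 / 8) := by
  set N : ℝ → ℝ := fun x => 1 - q + q * Real.exp x with hN
  set φ : ℝ → ℝ := fun x => Real.log (N x) - q * x with hφ
  set D : ℝ → ℝ := fun x => q * Real.exp x / N x - q with hD
  have hNpos : ∀ x, 0 < N x := fun x => N_pos h0 h1 x
  have hNd : ∀ x, HasDerivAt N (q * Real.exp x) x := fun x =>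
    ((Real.hasDerivAt_exp x).const_mul q).const_add (1 - q)
  have hφd : ∀ x, HasDerivAt φ (D x) x := by
    intro x
    have h2 : HasDerivAt (fun x => Real.log (N x)) (q * Real.exp x / N x) x :=
      (hNd x).log (hNpos x).ne'
    rw [show D x = q * Real.exp x / N x - q * 1 by rw [mul_one]]
    exact h2.sub ((hasDerivAt_id x).const_mul q)
  have hDd : ∀ x, HasDerivAt D ((q * Real.exp x * N x - q * Real.exp x * (q * Real.exp x)) / (N x) ^ 2) x := by
    intro x
    have hnum : HasDerivAt (fun x => q * Real.exp x) (q * Real.exp x) x :=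
      (Real.hasDerivAt_exp x).const_mul q
    exact (hnum.div (hNd x) (hNpos x).ne').sub_const q
  have hD'bound : ∀ x, |(q * Real.exp x * N x - q * Real.exp x * (q * Real.exp x)) / (N x) ^ 2| ≤ 1 / 4 := by
    intro x
    have hA : 0 ≤ q * Real.exp x := mul_nonneg h0 (Real.exp_pos x).le
    have hB : (0:ℝ) ≤ 1 - q := by linarith
    have hNx : 0 < N x := hNpos x
    have hNeq : N x = (1 - q) + q * Real.exp x := rfl
    rw [abs_div, abs_of_nonneg (by nlinarith), abs_of_nonneg (by positivity)]
    rw [div_le_iff₀ (by positivity)]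
    nlinarith [sq_nonneg (1 - q - q * Real.exp x)]
  have hDbound : ∀ x, |D x| ≤ |x| / 4 := by
    intro x
    have hD0 : D 0 = 0 := by simp [hD, hN]
    have := convex_univ.norm_image_sub_le_of_norm_hasDerivWithin_le
      (f := D) (f' := fun x => (q * Real.exp x * N x - q * Real.exp x * (q * Real.exp x)) / (N x) ^ 2)
      (fun x _ => (hDd x).hasDerivWithinAt)
      (fun x _ => by rw [Real.norm_eq_abs]; exact hD'bound x) (Set.mem_univ 0) (Set.mem_univ x)
    simp only [hD0, sub_zero, Real.norm_eq_abs] at this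
    linarith [this]
  -- F s = h^2*s^2/8 - φ (s*h)
  set F : ℝ → ℝ := fun s => h ^ 2 * s ^ 2 / 8 - φ (s * h) with hF
  have hFd : ∀ s, HasDerivAt F (h ^ 2 * s / 4 - D (s * h) * h) s := by
    intro s
    have h1' : HasDerivAt (fun s : ℝ => h ^ 2 * s ^ 2 / 8) (h ^ 2 * s / 4) s := by
      have : HasDerivAt (fun x : ℝ => h ^ 2 * x ^ 2 / 8) _ s := ((hasDerivAt_pow 2 s).const_mul (h ^ 2)).div_const 8
      convert this using 1
      ring
    have h2' : HasDerivAt (fun s : ℝ => φ (s * h)) (D (s * h) * h) s := by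
      have := (hφd (s * h)).comp s (hasDerivAt_mul_const h)
      exact this
    exact h1'.sub h2'
  have hφh : φ h ≤ h ^ 2 / 8 := by
    have hmono : MonotoneOn F (Set.Icc 0 1) := by
      apply monotoneOn_of_deriv_nonneg (convex_Icc 0 1)
      · exact fun s _ => (hFd s).continuousAt.continuousWithinAt
      · exact fun s _ => ((hFd s).differentiableAt).differentiableWithinAt
      · intro s hs
        rw [interior_Icc] at hs
        rw [(hFd s).deriv]
        have hs0 : 0 ≤ s := hs.1.le
        have hb := hDbound (s * h)
        have h3 : D (s * h) * h ≤ |D (s * h)| * |h| := by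
          calc D (s * h) * h ≤ |D (s * h) * h| := le_abs_self _
            _ = |D (s * h)| * |h| := abs_mul _ _
        have h4 : |D (s * h)| * |h| ≤ (|s * h| / 4) * |h| := by
          apply mul_le_mul_of_nonneg_right hb (abs_nonneg _)
        have h5 : |s * h| * |h| = s * h ^ 2 := by
          rw [abs_mul, abs_of_nonneg hs0, mul_assoc, abs_mul_abs_self]; ring
        have h6 : |s * h| / 4 * |h| = s * h ^ 2 / 4 := by
          rw [div_mul_eq_mul_div, h5]
        nlinarith [h3.trans (h4.trans_eq h6)]
    have hF0 : F 0 = 0 := by simp [hF, hφ, hN]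
    have := hmono (Set.mem_Icc.2 ⟨le_refl 0, zero_le_one⟩) (Set.mem_Icc.2 ⟨zero_le_one, le_refl 1⟩) zero_le_one
    rw [hF0] at this
    simp only [hF, one_pow, mul_one, one_mul] at this
    linarith
  have key : (1 - q) * Real.exp (-(q * h)) + q * Real.exp ((1 - q) * h) = Real.exp (φ h) := by
    rw [hφ]
    simp only
    rw [Real.exp_sub, Real.exp_log (hNpos h)]
    rw [eq_div_iff (Real.exp_pos _).ne']
    have e1 : Real.exp (-(q * h)) * Real.exp (q * h) = 1 := by
      rw [← Real.exp_add]; simp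
    have e2 : Real.exp ((1 - q) * h) * Real.exp (q * h) = Real.exp h := by
      rw [← Real.exp_add]; congr 1; ring
    show _ = N h
    rw [hN]
    linear_combination (1 - q) * e1 + q * e2
  rw [key]
  exact Real.exp_le_exp.2 hφh

lemma hoeffding_fin {ι : Type*} [Fintype ι] (w v : ι → ℝ) (hw : ∀ i, 0 ≤ w i)
    (hw1 : ∑ i, w i = 1) (hv0 : ∑ i, w i * v i = 0) {lo hi : ℝ}
    (hlo : ∀ i, lo ≤ v i) (hhi : ∀ i, v i ≤ hi) (t : ℝ) :
    ∑ i, w i * Real.exp (t * v i) ≤ Real.exp (t ^ 2 * (hi - lo) ^ 2 / 8) := by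
  have hne : Nonempty ι := by
    by_contra hc
    rw [not_nonempty_iff] at hc
    rw [Finset.univ_eq_empty, Finset.sum_empty] at hw1
    norm_num at hw1
  obtain ⟨i0⟩ := hne
  have hlohi : lo ≤ hi := (hlo i0).trans (hhi i0)
  have hlo0 : lo ≤ 0 := by
    have h := Finset.sum_le_sum (s := Finset.univ)
      (fun i _ => mul_le_mul_of_nonneg_left (hlo i) (hw i))
    rw [hv0, ← Finset.sum_mul, hw1, one_mul] at h
    exact h
  have hhi0 : 0 ≤ hi := by
    have h := Finset.sum_le_sum (s := Finset.univ)
      (fun i _ => mul_le_mul_of_nonneg_left (hhi i) (hw i))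
    rw [hv0, ← Finset.sum_mul, hw1, one_mul] at h
    exact h
  rcases eq_or_lt_of_le hlohi with heq | hlt
  · have hv : ∀ i, v i = 0 := by
      intro i
      have h1 := hlo i; have h2 := hhi i
      rw [← heq] at h2
      have : lo = 0 := le_antisymm hlo0 (by rw [heq]; exact hhi0)
      linarith
    have : ∑ i, w i * Real.exp (t * v i) = 1 := by
      rw [← hw1]
      exact Finset.sum_congr rfl fun i _ => by rw [hv i]; simp
    rw [this]
    exact Real.one_le_exp (by positivity)
  · have hd : (0:ℝ) < hi - lo := by linarith
    set q : ℝ := -lo / (hi - lo) with hq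
    set hh : ℝ := t * (hi - lo) with hhh
    have hq0 : 0 ≤ q := div_nonneg (by linarith) hd.le
    have hq1 : q ≤ 1 := by
      rw [div_le_one hd]; linarith
    have key : ∀ i, Real.exp (t * v i) ≤
        (hi - v i) / (hi - lo) * Real.exp (t * lo) + (v i - lo) / (hi - lo) * Real.exp (t * hi) := by
      intro i
      have ha : 0 ≤ (hi - v i) / (hi - lo) := div_nonneg (by linarith [hhi i]) hd.le
      have hb : 0 ≤ (v i - lo) / (hi - lo) := div_nonneg (by linarith [hlo i]) hd.le
      have hab : (hi - v i) / (hi - lo) + (v i - lo) / (hi - lo) = 1 := by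
        field_simp
        ring
      have hcx := convexOn_exp.2 (Set.mem_univ (t * lo)) (Set.mem_univ (t * hi)) ha hb hab
      simp only [smul_eq_mul] at hcx
      have harg : (hi - v i) / (hi - lo) * (t * lo) + (v i - lo) / (hi - lo) * (t * hi) = t * v i := by
        field_simp; ring
      rwa [harg] at hcx
    have S1 : ∑ i, w i * (hi - v i) = hi := by
      simp only [mul_sub]
      rw [Finset.sum_sub_distrib, ← Finset.sum_mul, hw1, hv0, one_mul, sub_zero]
    have S2 : ∑ i, w i * (v i - lo) = -lo := by
      simp only [mul_sub]
      rw [Finset.sum_sub_distrib, hv0, ← Finset.sum_mul, hw1, one_mul, zero_sub]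
    calc ∑ i, w i * Real.exp (t * v i)
        ≤ ∑ i, w i * ((hi - v i) / (hi - lo) * Real.exp (t * lo)
            + (v i - lo) / (hi - lo) * Real.exp (t * hi)) :=
          Finset.sum_le_sum fun i _ => mul_le_mul_of_nonneg_left (key i) (hw i)
      _ = (∑ i, w i * (hi - v i)) * (Real.exp (t * lo) / (hi - lo))
          + (∑ i, w i * (v i - lo)) * (Real.exp (t * hi) / (hi - lo)) := by
          rw [Finset.sum_mul, Finset.sum_mul, ← Finset.sum_add_distrib]
          exact Finset.sum_congr rfl fun i _ => by ring
      _ = (1 - q) * Real.exp (-(q * hh)) + q * Real.exp ((1 - q) * hh) := by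
          rw [S1, S2]
          have e1 : t * lo = -(q * hh) := by
            rw [hq, hhh]; field_simp
          have e2 : t * hi = (1 - q) * hh := by
            rw [hq, hhh]; field_simp; ring
          rw [← e1, ← e2]
          have e3 : (1 - q) = hi / (hi - lo) := by
            rw [hq]; field_simp; ring
          rw [e3, hq]
          ring
      _ ≤ Real.exp (hh ^ 2 / 8) := hoeffding_core hq0 hq1 hh
      _ = Real.exp (t ^ 2 * (hi - lo) ^ 2 / 8) := by
          rw [hhh, mul_pow]

lemma mass_one {k : ℕ} (p : Fin k → ℝ) (hsum : ∑ i, p i = 1) (M : ℕ) :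
    ∑ x : Fin M → Fin k, ∏ j, p (x j) = 1 := by
  have h := Finset.prod_univ_sum (t := fun _ : Fin M => (Finset.univ : Finset (Fin k)))
    (f := fun _ a => p a)
  rw [Fintype.piFinset_univ] at h
  rw [← h, hsum]
  simp

lemma sum_cons {k M : ℕ} (G : (Fin (M + 1) → Fin k) → ℝ) :
    ∑ x : Fin (M + 1) → Fin k, G x = ∑ a : Fin k, ∑ y : Fin M → Fin k, G (Fin.cons a y) := by
  rw [← Equiv.sum_comp (Fin.consEquiv (fun _ => Fin k)) G, Fintype.sum_prod_type]
  rfl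

lemma W_cons {k M : ℕ} (p : Fin k → ℝ) (a : Fin k) (y : Fin M → Fin k) :
    (∏ j : Fin (M + 1), p ((Fin.cons a y : Fin (M + 1) → Fin k) j)) = p a * ∏ j, p (y j) := by
  rw [Fin.prod_univ_succ]
  simp

lemma cons_eq_update {k M : ℕ} (a b : Fin k) (y : Fin M → Fin k) :
    (Fin.cons a y : Fin (M + 1) → Fin k) = Function.update (Fin.cons b y : Fin (M + 1) → Fin k) 0 a := by
  rw [Fin.update_cons_zero]

lemma mgf_bound {k : ℕ} (p : Fin k → ℝ) (hnn : ∀ i, 0 ≤ p i) (hsum : ∑ i, p i = 1) :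
    ∀ (M : ℕ) (f : (Fin M → Fin k) → ℝ) (c : ℝ),
      (∀ (x : Fin M → Fin k) (j : Fin M) (a : Fin k), |f (Function.update x j a) - f x| ≤ c) →
      ∀ t : ℝ,
      ∑ x : Fin M → Fin k, (∏ j, p (x j)) *
          Real.exp (t * (f x - ∑ y : Fin M → Fin k, (∏ j, p (y j)) * f y))
        ≤ Real.exp (M * t ^ 2 * c ^ 2 / 8) := by
  intro M
  induction M with
  | zero =>
    intro f c hdiff t
    rw [Finset.univ_unique]
    simp
  | succ M ih =>
    intro f c hdiff t
    have hk : 0 < k := by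
      rcases Nat.eq_zero_or_pos k with h | h
      · subst h; simp at hsum
      · exact h
    haveI hkne : Nonempty (Fin k) := Fin.pos_iff_nonempty.mp hk
    have a0 : Fin k := ⟨0, hk⟩
    have hc0 : 0 ≤ c := le_trans (abs_nonneg _) (hdiff (fun _ => a0) 0 a0)
    have hWnn : ∀ {N : ℕ} (y : Fin N → Fin k), 0 ≤ ∏ j, p (y j) :=
      fun y => Finset.prod_nonneg fun j _ => hnn _
    set g : Fin k → ℝ := fun a => ∑ y : Fin M → Fin k, (∏ j, p (y j)) * f (Fin.cons a y) with hg
    set μ : ℝ := ∑ x : Fin (M + 1) → Fin k, (∏ j, p (x j)) * f x with hμdef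
    have hμ : μ = ∑ a, p a * g a := by
      rw [hμdef, sum_cons]
      refine Finset.sum_congr rfl fun a _ => ?_
      rw [hg, Finset.mul_sum]
      exact Finset.sum_congr rfl fun y _ => by rw [W_cons]; ring
    -- bounded differences of g
    have gdiff : ∀ a b : Fin k, g a - g b ≤ c := by
      intro a b
      have h1 : g a - g b = ∑ y : Fin M → Fin k,
          (∏ j, p (y j)) * (f (Fin.cons a y) - f (Fin.cons b y)) := by
        rw [hg]
        simp only [mul_sub]
        rw [Finset.sum_sub_distrib]
      rw [h1]
      calc ∑ y : Fin M → Fin k, (∏ j, p (y j)) * (f (Fin.cons a y) - f (Fin.cons b y))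
          ≤ ∑ y : Fin M → Fin k, (∏ j, p (y j)) * c := by
            refine Finset.sum_le_sum fun y _ => mul_le_mul_of_nonneg_left ?_ (hWnn y)
            refine le_trans (le_abs_self _) ?_
            have h2 := hdiff (Fin.cons b y) 0 a
            rw [← cons_eq_update a b y] at h2
            exact h2
        _ = c := by rw [← Finset.sum_mul, mass_one p hsum, one_mul]
    -- inner expectation bound via ih
    have inner_bound : ∀ a : Fin k,
        ∑ y : Fin M → Fin k, (∏ j, p (y j)) * Real.exp (t * (f (Fin.cons a y) - g a))
          ≤ Real.exp (M * t ^ 2 * c ^ 2 / 8) := by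
      intro a
      have hdiffa : ∀ (y : Fin M → Fin k) (j : Fin M) (b : Fin k),
          |f (Fin.cons a (Function.update y j b)) - f (Fin.cons a y)| ≤ c := by
        intro y j b
        rw [Fin.cons_update]
        exact hdiff (Fin.cons a y) j.succ b
      exact ih (fun y => f (Fin.cons a y)) c hdiffa t
    -- main chain
    have expand : ∑ x : Fin (M + 1) → Fin k, (∏ j, p (x j)) * Real.exp (t * (f x - μ))
        = ∑ a : Fin k, p a * Real.exp (t * (g a - μ)) *
            (∑ y : Fin M → Fin k, (∏ j, p (y j)) * Real.exp (t * (f (Fin.cons a y) - g a))) := by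
      rw [sum_cons (fun x => (∏ j, p (x j)) * Real.exp (t * (f x - μ)))]
      refine Finset.sum_congr rfl fun a _ => ?_
      rw [Finset.mul_sum]
      refine Finset.sum_congr rfl fun y _ => ?_
      rw [W_cons]
      have : Real.exp (t * (f (Fin.cons a y) - μ))
          = Real.exp (t * (g a - μ)) * Real.exp (t * (f (Fin.cons a y) - g a)) := by
        rw [← Real.exp_add]; congr 1; ring
      rw [this]; ring
    rw [expand]
    have step1 : ∑ a : Fin k, p a * Real.exp (t * (g a - μ)) *
            (∑ y : Fin M → Fin k, (∏ j, p (y j)) * Real.exp (t * (f (Fin.cons a y) - g a)))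
        ≤ ∑ a : Fin k, p a * Real.exp (t * (g a - μ)) * Real.exp (M * t ^ 2 * c ^ 2 / 8) := by
      refine Finset.sum_le_sum fun a _ => ?_
      exact mul_le_mul_of_nonneg_left (inner_bound a)
        (mul_nonneg (hnn a) (Real.exp_pos _).le)
    refine le_trans step1 ?_
    -- hoeffding on outer
    have hv0 : ∑ a, p a * (g a - μ) = 0 := by
      simp only [mul_sub]
      rw [Finset.sum_sub_distrib, ← hμ, ← Finset.sum_mul, hsum, one_mul, sub_self]
    obtain ⟨amax, _, hmax⟩ := Finset.exists_mem_eq_sup' (Finset.univ_nonempty (α := Fin k)) g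
    obtain ⟨amin, _, hmin⟩ := Finset.exists_mem_eq_inf' (Finset.univ_nonempty (α := Fin k)) g
    have hoeff := hoeffding_fin p (fun a => g a - μ) hnn hsum hv0
      (lo := Finset.univ.inf' Finset.univ_nonempty g - μ)
      (hi := Finset.univ.sup' Finset.univ_nonempty g - μ)
      (fun a => sub_le_sub_right (Finset.inf'_le g (Finset.mem_univ a)) μ)
      (fun a => sub_le_sub_right (Finset.le_sup' g (Finset.mem_univ a)) μ) t
    have hgm : g amin ≤ g amax := by
      have h := Finset.inf'_le g (Finset.mem_univ amax)
      rw [hmin] at h; exact h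
    have hwidth : Finset.univ.sup' Finset.univ_nonempty g - μ -
        (Finset.univ.inf' Finset.univ_nonempty g - μ) ≤ c := by
      rw [hmax, hmin]
      have := gdiff amax amin
      linarith
    have hwidth0 : 0 ≤ Finset.univ.sup' Finset.univ_nonempty g - μ -
        (Finset.univ.inf' Finset.univ_nonempty g - μ) := by
      rw [hmax, hmin]
      linarith
    have hoeff2 : ∑ a, p a * Real.exp (t * (g a - μ)) ≤ Real.exp (t ^ 2 * c ^ 2 / 8) := by
      refine le_trans hoeff (Real.exp_le_exp.2 ?_)
      have h1 : (Finset.univ.sup' Finset.univ_nonempty g - μ -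
          (Finset.univ.inf' Finset.univ_nonempty g - μ)) ^ 2 ≤ c ^ 2 :=
        pow_le_pow_left₀ hwidth0 hwidth 2
      have h2 : 0 ≤ t ^ 2 := sq_nonneg t
      have h3 := mul_le_mul_of_nonneg_left h1 h2
      linarith
    calc ∑ a : Fin k, p a * Real.exp (t * (g a - μ)) * Real.exp (M * t ^ 2 * c ^ 2 / 8)
        = (∑ a : Fin k, p a * Real.exp (t * (g a - μ))) * Real.exp (M * t ^ 2 * c ^ 2 / 8) := by
          rw [Finset.sum_mul]
      _ ≤ Real.exp (t ^ 2 * c ^ 2 / 8) * Real.exp (M * t ^ 2 * c ^ 2 / 8) :=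
          mul_le_mul_of_nonneg_right hoeff2 (Real.exp_pos _).le
      _ = Real.exp ((↑(M + 1)) * t ^ 2 * c ^ 2 / 8) := by
          rw [← Real.exp_add]
          congr 1
          push_cast
          ring

lemma tail_bound {k : ℕ} (p : Fin k → ℝ) (hnn : ∀ i, 0 ≤ p i) (hsum : ∑ i, p i = 1)
    (M : ℕ) (hM : 1 ≤ M) (f : (Fin M → Fin k) → ℝ)
    (hdiff : ∀ (x : Fin M → Fin k) (j : Fin M) (a : Fin k),
      |f (Function.update x j a) - f x| ≤ 2 / M)
    (t : ℝ) (ht : 0 ≤ t) :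
    ∑ x ∈ Finset.univ.filter (fun x : Fin M → Fin k =>
        t ≤ f x - ∑ y : Fin M → Fin k, (∏ j, p (y j)) * f y), ∏ j, p (x j)
      ≤ Real.exp (-(M * t ^ 2 / 2)) := by
  have hM0 : (0:ℝ) < (M:ℝ) := by exact_mod_cast hM
  set μ := ∑ y : Fin M → Fin k, (∏ j, p (y j)) * f y with hμ
  set lam := (M:ℝ) * t with hlam
  have hlam0 : 0 ≤ lam := mul_nonneg hM0.le ht
  have hWnn : ∀ y : Fin M → Fin k, 0 ≤ ∏ j, p (y j) :=
    fun y => Finset.prod_nonneg fun j _ => hnn _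
  calc ∑ x ∈ Finset.univ.filter (fun x : Fin M → Fin k => t ≤ f x - μ), ∏ j, p (x j)
      ≤ ∑ x ∈ Finset.univ.filter (fun x : Fin M → Fin k => t ≤ f x - μ),
          (∏ j, p (x j)) * Real.exp (lam * (f x - μ) - lam * t) := by
        refine Finset.sum_le_sum fun x hx => ?_
        rw [Finset.mem_filter] at hx
        have h1 : 0 ≤ lam * (f x - μ) - lam * t := by
          have := mul_le_mul_of_nonneg_left hx.2 hlam0
          linarith
        nth_rewrite 1 [← mul_one (∏ j, p (x j))]
        exact mul_le_mul_of_nonneg_left (Real.one_le_exp h1) (hWnn x)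
    _ ≤ ∑ x : Fin M → Fin k, (∏ j, p (x j)) * Real.exp (lam * (f x - μ) - lam * t) :=
        Finset.sum_le_sum_of_subset_of_nonneg (Finset.filter_subset _ _)
          (fun x _ _ => mul_nonneg (hWnn x) (Real.exp_pos _).le)
    _ = Real.exp (-(lam * t)) * ∑ x : Fin M → Fin k, (∏ j, p (x j)) * Real.exp (lam * (f x - μ)) := by
        rw [Finset.mul_sum]
        refine Finset.sum_congr rfl fun x _ => ?_
        rw [sub_eq_add_neg, Real.exp_add]
        ring
    _ ≤ Real.exp (-(lam * t)) * Real.exp (M * lam ^ 2 * (2 / M) ^ 2 / 8) :=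
        mul_le_mul_of_nonneg_left (mgf_bound p hnn hsum M f (2 / M) hdiff lam)
          (Real.exp_pos _).le
    _ = Real.exp (-(M * t ^ 2 / 2)) := by
        rw [← Real.exp_add]
        congr 1
        rw [hlam]
        field_simp
        ring

lemma count_eq {k M : ℕ} (x : Fin M → Fin k) (i : Fin k) :
    ((Finset.univ.filter (fun j => x j = i)).card : ℝ) = ∑ j, if x j = i then (1:ℝ) else 0 := by
  rw [Finset.card_filter]
  push_cast
  rfl

lemma E_single {k M : ℕ} (p : Fin k → ℝ) (hsum : ∑ i, p i = 1) (j : Fin M) (φ : Fin k → ℝ) :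
    ∑ x : Fin M → Fin k, (∏ j', p (x j')) * φ (x j) = ∑ a, p a * φ a := by
  have key : ∀ x : Fin M → Fin k, (∏ j', p (x j')) * φ (x j)
      = ∏ j'', p (x j'') * (if j'' = j then φ (x j'') else 1) := by
    intro x
    rw [Finset.prod_mul_distrib, Finset.prod_ite_eq']
    simp
  calc ∑ x : Fin M → Fin k, (∏ j', p (x j')) * φ (x j)
      = ∑ x : Fin M → Fin k, ∏ j'', p (x j'') * (if j'' = j then φ (x j'') else 1) :=
        Finset.sum_congr rfl fun x _ => key x
    _ = ∏ j'', ∑ a, p a * (if j'' = j then φ a else 1) := by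
        have h := Finset.prod_univ_sum (t := fun _ : Fin M => (Finset.univ : Finset (Fin k)))
          (f := fun j'' a => p a * (if j'' = j then φ a else 1))
        rw [Fintype.piFinset_univ] at h
        rw [← h]
    _ = ∑ a, p a * φ a := by
        rw [← Finset.mul_prod_erase Finset.univ _ (Finset.mem_univ j)]
        have e1 : (∑ a, p a * (if j = j then φ a else 1)) = ∑ a, p a * φ a :=
          Finset.sum_congr rfl fun a _ => by rw [if_pos rfl]
        have : ∀ j'' ∈ Finset.univ.erase j, (∑ a, p a * (if j'' = j then φ a else 1)) = 1 := by
          intro j'' hj''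
          rw [Finset.sum_congr rfl fun a _ => by
            rw [if_neg (Finset.ne_of_mem_erase hj''), mul_one]]
          exact hsum
        rw [e1, Finset.prod_congr rfl this, Finset.prod_const_one, mul_one]

lemma E_pair {k M : ℕ} (p : Fin k → ℝ) (hsum : ∑ i, p i = 1) {j j' : Fin M} (hjj : j ≠ j')
    (φ ψ : Fin k → ℝ) :
    ∑ x : Fin M → Fin k, (∏ j'', p (x j'')) * (φ (x j) * ψ (x j'))
      = (∑ a, p a * φ a) * (∑ a, p a * ψ a) := by
  have key : ∀ x : Fin M → Fin k, (∏ j'', p (x j'')) * (φ (x j) * ψ (x j'))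
      = ∏ j'', p (x j'') * (if j'' = j then φ (x j'') else 1) * (if j'' = j' then ψ (x j'') else 1) := by
    intro x
    rw [Finset.prod_mul_distrib, Finset.prod_mul_distrib, Finset.prod_ite_eq', Finset.prod_ite_eq']
    simp [mul_assoc]
  calc ∑ x : Fin M → Fin k, (∏ j'', p (x j'')) * (φ (x j) * ψ (x j'))
      = ∑ x : Fin M → Fin k, ∏ j'', p (x j'') * (if j'' = j then φ (x j'') else 1)
          * (if j'' = j' then ψ (x j'') else 1) :=
        Finset.sum_congr rfl fun x _ => key x
    _ = ∏ j'', ∑ a, p a * (if j'' = j then φ a else 1) * (if j'' = j' then ψ a else 1) := by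
        have h := Finset.prod_univ_sum (t := fun _ : Fin M => (Finset.univ : Finset (Fin k)))
          (f := fun j'' a => p a * (if j'' = j then φ a else 1) * (if j'' = j' then ψ a else 1))
        rw [Fintype.piFinset_univ] at h
        rw [← h]
    _ = (∑ a, p a * φ a) * (∑ a, p a * ψ a) := by
        rw [← Finset.mul_prod_erase Finset.univ _ (Finset.mem_univ j)]
        rw [← Finset.mul_prod_erase (Finset.univ.erase j) _
          (Finset.mem_erase.2 ⟨(Ne.symm hjj), Finset.mem_univ j'⟩)]
        have e1 : (∑ a, p a * (if j = j then φ a else 1) * (if j = j' then ψ a else 1))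
            = ∑ a, p a * φ a := by
          refine Finset.sum_congr rfl fun a _ => ?_
          rw [if_pos rfl, if_neg hjj, mul_one]
        have e2 : (∑ a, p a * (if j' = j then φ a else 1) * (if j' = j' then ψ a else 1))
            = ∑ a, p a * ψ a := by
          refine Finset.sum_congr rfl fun a _ => ?_
          rw [if_pos rfl, if_neg (Ne.symm hjj), mul_one]
        have e3 : ∀ j'' ∈ (Finset.univ.erase j).erase j',
            (∑ a, p a * (if j'' = j then φ a else 1) * (if j'' = j' then ψ a else 1)) = 1 := by
          intro j'' hj''
          rw [Finset.mem_erase] at hj''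
          have h2 := Finset.ne_of_mem_erase hj''.2
          rw [Finset.sum_congr rfl fun a _ => by
            rw [if_neg h2, if_neg hj''.1, mul_one, mul_one]]
          exact hsum
        rw [e1, e2, Finset.prod_congr rfl e3, Finset.prod_const_one, mul_one]

lemma f_bdd {k M : ℕ} (hM : 1 ≤ M) (x : Fin M → Fin k) (j : Fin M) (a : Fin k) :
    |(∑ i, (((Finset.univ.filter (fun j' => Function.update x j a j' = i)).card : ℝ) / M) *
        (1 - ((Finset.univ.filter (fun j' => Function.update x j a j' = i)).card : ℝ) / M))
      - ∑ i, (((Finset.univ.filter (fun j' => x j' = i)).card : ℝ) / M) *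
        (1 - ((Finset.univ.filter (fun j' => x j' = i)).card : ℝ) / M)| ≤ 2 / M := by
  classical
  have hM0 : (0:ℝ) < (M:ℝ) := by exact_mod_cast hM
  set y := Function.update x j a with hy
  set cy : Fin k → ℝ := fun i => ((Finset.univ.filter (fun j' => y j' = i)).card : ℝ) with hcy
  set cx : Fin k → ℝ := fun i => ((Finset.univ.filter (fun j' => x j' = i)).card : ℝ) with hcx
  set d : Fin k → ℝ := fun i => cy i / M * (1 - cy i / M) - cx i / M * (1 - cx i / M) with hd
  have hdelta : ∀ i, cy i - cx i = (if a = i then (1:ℝ) else 0) - (if x j = i then 1 else 0) := by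
    intro i
    simp only [hcy, hcx]
    rw [count_eq, count_eq, ← Finset.sum_sub_distrib]
    rw [Finset.sum_eq_single j]
    · rw [hy, Function.update_self]
    · intro j' _ hj'
      rw [hy, Function.update_of_ne hj']
      ring
    · intro h; exact absurd (Finset.mem_univ j) h
  have hbound : ∀ {N : ℕ} (z : Fin N → Fin k) (i : Fin k),
      (0:ℝ) ≤ ((Finset.univ.filter (fun j' => z j' = i)).card : ℝ) ∧
      ((Finset.univ.filter (fun j' => z j' = i)).card : ℝ) ≤ N := by
    intro N z i
    refine ⟨by positivity, ?_⟩
    have h := Finset.card_filter_le (Finset.univ : Finset (Fin N)) (fun j' => z j' = i)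
    rw [Finset.card_univ, Fintype.card_fin] at h
    exact_mod_cast h
  have hdsmall : ∀ i, |d i| ≤ 1 / M := by
    intro i
    have h1 : (0:ℝ) ≤ cy i ∧ cy i ≤ M := hbound y i
    have h2 : (0:ℝ) ≤ cx i ∧ cx i ≤ M := hbound x i
    have heq : d i = ((cy i - cx i) / M) * (1 - (cy i + cx i) / M) := by
      simp only [hd]; field_simp; ring
    have h3 : |1 - (cy i + cx i) / M| ≤ 1 := by
      rw [abs_le]
      constructor
      · have : (cy i + cx i) / M ≤ 2 := by
          rw [div_le_iff₀ hM0]; linarith [h1.2, h2.2]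
        linarith
      · have : 0 ≤ (cy i + cx i) / M := div_nonneg (by linarith [h1.1, h2.1]) hM0.le
        linarith
    have h5 : |cy i - cx i| ≤ 1 := by
      rw [hdelta i]
      split_ifs <;> norm_num
    calc |d i| = |(cy i - cx i) / M| * |1 - (cy i + cx i) / M| := by rw [heq, abs_mul]
      _ ≤ |(cy i - cx i) / M| * 1 := mul_le_mul_of_nonneg_left h3 (abs_nonneg _)
      _ = |cy i - cx i| / M := by rw [mul_one, abs_div, abs_of_pos hM0]
      _ ≤ 1 / M := by gcongr
  have hzero : ∀ i, i ∉ ({a, x j} : Finset (Fin k)) → d i = 0 := by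
    intro i hi
    simp only [Finset.mem_insert, Finset.mem_singleton] at hi
    push_neg at hi
    have h0 : cy i - cx i = 0 := by
      rw [hdelta i, if_neg (fun h => hi.1 h.symm), if_neg (fun h => hi.2 h.symm)]
      ring
    have h0' : cy i = cx i := by linarith
    simp only [hd, h0']
    ring
  have goal_eq : (∑ i, (cy i / M) * (1 - cy i / M)) - (∑ i, (cx i / M) * (1 - cx i / M))
      = ∑ i, d i := by
    rw [← Finset.sum_sub_distrib]
  show |(∑ i, (cy i / M) * (1 - cy i / M)) - (∑ i, (cx i / M) * (1 - cx i / M))| ≤ 2 / M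
  rw [goal_eq]
  have hsplit : (∑ i, d i) = ∑ i ∈ ({a, x j} : Finset (Fin k)), d i :=
    (Finset.sum_subset (Finset.subset_univ _) (fun i _ hi => hzero i hi)).symm
  rw [hsplit]
  calc |∑ i ∈ ({a, x j} : Finset (Fin k)), d i|
      ≤ ∑ i ∈ ({a, x j} : Finset (Fin k)), |d i| := Finset.abs_sum_le_sum_abs _ _
    _ ≤ ∑ _i ∈ ({a, x j} : Finset (Fin k)), 1 / (M:ℝ) :=
        Finset.sum_le_sum fun i _ => hdsmall i
    _ = (({a, x j} : Finset (Fin k)).card : ℝ) * (1 / M) := by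
        rw [Finset.sum_const, nsmul_eq_mul]
    _ ≤ 2 * (1 / M) := by
        have hc := Finset.card_insert_le a ({x j} : Finset (Fin k))
        rw [Finset.card_singleton] at hc
        have hc' : (({a, x j} : Finset (Fin k)).card : ℝ) ≤ 2 := by exact_mod_cast hc
        exact mul_le_mul_of_nonneg_right hc' (by positivity)
    _ = 2 / M := by ring

lemma mean_exact {k M : ℕ} (p : Fin k → ℝ) (hsum : ∑ i, p i = 1) (hM : 1 ≤ M) :
    ∑ x : Fin M → Fin k, (∏ j, p (x j)) *
        (∑ i, (((Finset.univ.filter (fun j => x j = i)).card : ℝ) / M) *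
          (1 - ((Finset.univ.filter (fun j => x j = i)).card : ℝ) / M))
      = (1 - 1 / (M:ℝ)) * ∑ i, p i * (1 - p i) := by
  classical
  have hM0 : (0:ℝ) < (M:ℝ) := by exact_mod_cast hM
  set cnt : (Fin M → Fin k) → Fin k → ℝ :=
    fun x i => ((Finset.univ.filter (fun j => x j = i)).card : ℝ) with hcnt
  have hindsum : ∀ i : Fin k, (∑ a, p a * (if a = i then (1:ℝ) else 0)) = p i := by
    intro i
    simp [mul_ite, mul_one, mul_zero]
  have hS1 : ∀ i, ∑ x : Fin M → Fin k, (∏ j, p (x j)) * cnt x i = M * p i := by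
    intro i
    calc ∑ x : Fin M → Fin k, (∏ j, p (x j)) * cnt x i
        = ∑ x : Fin M → Fin k, ∑ j, (∏ j', p (x j')) * (if x j = i then (1:ℝ) else 0) := by
          refine Finset.sum_congr rfl fun x _ => ?_
          simp only [hcnt]
          rw [count_eq, Finset.mul_sum]
      _ = ∑ j : Fin M, ∑ x : Fin M → Fin k, (∏ j', p (x j')) * (if x j = i then (1:ℝ) else 0) :=
          Finset.sum_comm
      _ = ∑ j : Fin M, ∑ a, p a * (if a = i then (1:ℝ) else 0) :=
          Finset.sum_congr rfl fun j _ => E_single p hsum j (fun a => if a = i then 1 else 0)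
      _ = ∑ _j : Fin M, p i := Finset.sum_congr rfl fun j _ => hindsum i
      _ = M * p i := by
          rw [Finset.sum_const, Finset.card_univ, Fintype.card_fin, nsmul_eq_mul]
  have hS2 : ∀ i, ∑ x : Fin M → Fin k, (∏ j, p (x j)) * (cnt x i) ^ 2
      = M * p i + ((M:ℝ) ^ 2 - M) * p i ^ 2 := by
    intro i
    calc ∑ x : Fin M → Fin k, (∏ j, p (x j)) * (cnt x i) ^ 2
        = ∑ x : Fin M → Fin k, ∑ j, ∑ j', (∏ j'', p (x j'')) *
            ((if x j = i then (1:ℝ) else 0) * (if x j' = i then (1:ℝ) else 0)) := by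
          refine Finset.sum_congr rfl fun x _ => ?_
          simp only [hcnt]
          rw [count_eq, sq, Finset.sum_mul_sum]
          rw [Finset.mul_sum]
          refine Finset.sum_congr rfl fun j _ => ?_
          rw [Finset.mul_sum]
      _ = ∑ j : Fin M, ∑ j' : Fin M, ∑ x : Fin M → Fin k, (∏ j'', p (x j'')) *
            ((if x j = i then (1:ℝ) else 0) * (if x j' = i then (1:ℝ) else 0)) := by
          rw [Finset.sum_comm]
          refine Finset.sum_congr rfl fun j _ => Finset.sum_comm
      _ = ∑ j : Fin M, (p i + ((M:ℝ) - 1) * p i ^ 2) := by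
          refine Finset.sum_congr rfl fun j _ => ?_
          rw [← Finset.add_sum_erase Finset.univ _ (Finset.mem_univ j)]
          have hdiag : ∑ x : Fin M → Fin k, (∏ j'', p (x j'')) *
              ((if x j = i then (1:ℝ) else 0) * (if x j = i then (1:ℝ) else 0)) = p i := by
            have e : ∀ x : Fin M → Fin k,
                ((if x j = i then (1:ℝ) else 0) * (if x j = i then (1:ℝ) else 0))
                = (if x j = i then (1:ℝ) else 0) := by
              intro x; split_ifs <;> ring
            rw [Finset.sum_congr rfl fun x _ => by rw [e x]]
            rw [E_single p hsum j (fun a => if a = i then (1:ℝ) else 0)]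
            exact hindsum i
          have hoff : ∀ j' ∈ Finset.univ.erase j, ∑ x : Fin M → Fin k, (∏ j'', p (x j'')) *
              ((if x j = i then (1:ℝ) else 0) * (if x j' = i then (1:ℝ) else 0)) = p i * p i := by
            intro j' hj'
            rw [E_pair p hsum (Ne.symm (Finset.ne_of_mem_erase hj'))
              (fun a => if a = i then (1:ℝ) else 0) (fun a => if a = i then (1:ℝ) else 0)]
            rw [hindsum i]
          rw [hdiag, Finset.sum_congr rfl hoff, Finset.sum_const, nsmul_eq_mul]
          rw [Finset.card_erase_of_mem (Finset.mem_univ j), Finset.card_univ, Fintype.card_fin]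
          have : ((M - 1 : ℕ) : ℝ) = (M:ℝ) - 1 := by
            rw [Nat.cast_sub hM]; norm_num
          rw [this]
          ring
      _ = M * p i + ((M:ℝ) ^ 2 - M) * p i ^ 2 := by
          rw [Finset.sum_const, Finset.card_univ, Fintype.card_fin, nsmul_eq_mul]
          ring
  calc ∑ x : Fin M → Fin k, (∏ j, p (x j)) * (∑ i, (cnt x i / M) * (1 - cnt x i / M))
      = ∑ i, ∑ x : Fin M → Fin k, (∏ j, p (x j)) * ((cnt x i / M) * (1 - cnt x i / M)) := by
        rw [Finset.sum_comm]
        exact Finset.sum_congr rfl fun x _ => by rw [Finset.mul_sum]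
    _ = ∑ i, ((∑ x : Fin M → Fin k, (∏ j, p (x j)) * cnt x i) * (1 / M)
          - (∑ x : Fin M → Fin k, (∏ j, p (x j)) * (cnt x i) ^ 2) * (1 / M ^ 2)) := by
        refine Finset.sum_congr rfl fun i _ => ?_
        rw [Finset.sum_mul, Finset.sum_mul, ← Finset.sum_sub_distrib]
        refine Finset.sum_congr rfl fun x _ => ?_
        field_simp
    _ = ∑ i, ((M * p i) * (1 / M) - (M * p i + ((M:ℝ) ^ 2 - M) * p i ^ 2) * (1 / M ^ 2)) := by
        refine Finset.sum_congr rfl fun i _ => ?_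
        rw [hS1 i, hS2 i]
    _ = (1 - 1 / (M:ℝ)) * ∑ i, p i * (1 - p i) := by
        rw [Finset.mul_sum]
        refine Finset.sum_congr rfl fun i _ => ?_
        field_simp
        ring

/-- Concentration of the empirical normalized marginal benefit: with probability
at least `1 - ε` over `M` i.i.d. categorical samples from `p`,
`|L(p̂) - L(p)| ≤ 1/M + √((2/M)·log(2/ε))`. -/
theorem stmt5 (k M : ℕ) (hM : 1 ≤ M) (p : Fin k → ℝ)
    (hnn : ∀ i, 0 ≤ p i) (hsum : ∑ i, p i = 1)
    (ε : ℝ) (hε : 0 < ε) (hε1 : ε < 1) :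
    1 - ε ≤
      ∑ x ∈ Finset.univ.filter (fun x : Fin M → Fin k =>
          |(∑ i, (((Finset.univ.filter (fun j => x j = i)).card : ℝ) / M) *
              (1 - ((Finset.univ.filter (fun j => x j = i)).card : ℝ) / M)) -
            (∑ i, p i * (1 - p i))|
          ≤ 1 / M + Real.sqrt ((2 / M) * Real.log (2 / ε))),
        ∏ j, p (x j) := by
  classical
  have hM0 : (0:ℝ) < (M:ℝ) := by exact_mod_cast hM
  set f : (Fin M → Fin k) → ℝ := fun x =>
    ∑ i, (((Finset.univ.filter (fun j => x j = i)).card : ℝ) / M) *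
      (1 - ((Finset.univ.filter (fun j => x j = i)).card : ℝ) / M) with hf
  set Lp : ℝ := ∑ i, p i * (1 - p i) with hLpdef
  set t : ℝ := Real.sqrt ((2 / M) * Real.log (2 / ε)) with htdef
  have hWnn : ∀ x : Fin M → Fin k, 0 ≤ ∏ j, p (x j) :=
    fun x => Finset.prod_nonneg fun j _ => hnn _
  set μ : ℝ := ∑ y : Fin M → Fin k, (∏ j, p (y j)) * f y with hμdef
  have h2ε : (1:ℝ) < 2 / ε := by rw [lt_div_iff₀ hε]; linarith
  have hlog : 0 < Real.log (2 / ε) := Real.log_pos h2ε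
  have ht0 : 0 ≤ t := Real.sqrt_nonneg _
  have ht2 : t ^ 2 = (2 / M) * Real.log (2 / ε) := Real.sq_sqrt (by positivity)
  have hdiff : ∀ (x : Fin M → Fin k) (j : Fin M) (a : Fin k),
      |f (Function.update x j a) - f x| ≤ 2 / M := fun x j a => f_bdd hM x j a
  have hmean : μ = (1 - 1 / (M:ℝ)) * Lp := mean_exact p hsum hM
  have hp1 : ∀ i, p i ≤ 1 := fun i => by
    calc p i ≤ ∑ a, p a := Finset.single_le_sum (fun a _ => hnn a) (Finset.mem_univ i)
      _ = 1 := hsum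
  have hLp0 : 0 ≤ Lp :=
    Finset.sum_nonneg fun i _ => mul_nonneg (hnn i) (by linarith [hp1 i])
  have hLp1 : Lp ≤ 1 := by
    calc Lp ≤ ∑ i, p i := Finset.sum_le_sum fun i _ => by nlinarith [hnn i, hp1 i]
      _ = 1 := hsum
  have hbias : |μ - Lp| ≤ 1 / M := by
    rw [hmean]
    have he : (1 - 1 / (M:ℝ)) * Lp - Lp = -(Lp / M) := by field_simp; ring
    rw [he, abs_neg, abs_of_nonneg (div_nonneg hLp0 hM0.le)]
    gcongr
  have hup := tail_bound p hnn hsum M hM f hdiff t ht0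
  have hdiffneg : ∀ (x : Fin M → Fin k) (j : Fin M) (a : Fin k),
      |(fun x => -f x) (Function.update x j a) - (fun x => -f x) x| ≤ 2 / M := by
    intro x j a
    simp only
    rw [show -f (Function.update x j a) - -f x = -(f (Function.update x j a) - f x) by ring,
      abs_neg]
    exact hdiff x j a
  have hlow := tail_bound p hnn hsum M hM (fun x => -f x) hdiffneg t ht0
  have hmneg : ∑ y : Fin M → Fin k, (∏ j, p (y j)) * (-f y) = -μ := by
    rw [hμdef, ← Finset.sum_neg_distrib]
    exact Finset.sum_congr rfl fun y _ => by ring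
  simp only [hmneg] at hlow
  have hexp : Real.exp (-((M:ℝ) * t ^ 2 / 2)) = ε / 2 := by
    rw [ht2]
    have he : (M:ℝ) * ((2 / M) * Real.log (2 / ε)) / 2 = Real.log (2 / ε) := by
      field_simp
    rw [he, Real.exp_neg, Real.exp_log (by positivity)]
    field_simp
  have hmass : ∑ x : Fin M → Fin k, ∏ j, p (x j) = 1 := mass_one p hsum M
  set A := Finset.univ.filter (fun x : Fin M → Fin k => t ≤ f x - μ) with hA
  set B := Finset.univ.filter (fun x : Fin M → Fin k => t ≤ -f x - -μ) with hB
  set bad := Finset.univ.filter (fun x : Fin M → Fin k => ¬ (|f x - Lp| ≤ 1 / M + t)) with hbad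
  have hsub : bad ⊆ A ∪ B := by
    intro x hx
    rw [hbad, Finset.mem_filter] at hx
    have h1 : 1 / (M:ℝ) + t < |f x - Lp| := lt_of_not_ge hx.2
    have h2 : |f x - Lp| ≤ |f x - μ| + |μ - Lp| := abs_sub_le (f x) μ Lp
    have h3 : t < |f x - μ| := by linarith
    rcases lt_abs.mp h3 with h4 | h4
    · exact Finset.mem_union.2 (Or.inl (Finset.mem_filter.2 ⟨Finset.mem_univ x, h4.le⟩))
    · refine Finset.mem_union.2 (Or.inr (Finset.mem_filter.2 ⟨Finset.mem_univ x, ?_⟩))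
      linarith
  have key : ∑ x ∈ bad, (∏ j, p (x j)) ≤ ε := by
    calc ∑ x ∈ bad, (∏ j, p (x j))
        ≤ ∑ x ∈ A ∪ B, ∏ j, p (x j) :=
          Finset.sum_le_sum_of_subset_of_nonneg hsub (fun x _ _ => hWnn x)
      _ ≤ (∑ x ∈ A, ∏ j, p (x j)) + ∑ x ∈ B, ∏ j, p (x j) := by
          have h : (∑ x ∈ A ∪ B, ∏ j, p (x j)) + ∑ x ∈ A ∩ B, ∏ j, p (x j)
              = (∑ x ∈ A, ∏ j, p (x j)) + ∑ x ∈ B, ∏ j, p (x j) := Finset.sum_union_inter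
          have h2 : 0 ≤ ∑ x ∈ A ∩ B, ∏ j, p (x j) := Finset.sum_nonneg fun x _ => hWnn x
          linarith
      _ ≤ ε / 2 + ε / 2 :=
          add_le_add (le_trans hup (le_of_eq hexp)) (le_trans hlow (le_of_eq hexp))
      _ = ε := by ring
  have hsplit := Finset.sum_filter_add_sum_filter_not Finset.univ (fun x : Fin M → Fin k => |f x - Lp| ≤ 1 / M + t) (fun x => ∏ j, p (x j))
  rw [hmass] at hsplit
  have hbad2 : ∑ x ∈ Finset.univ.filter (fun x : Fin M → Fin k => ¬ (|f x - Lp| ≤ 1 / M + t)), (∏ j, p (x j)) ≤ ε := hbad ▸ key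
  linarith [hbad2, hsplit]
end

section
/- Let n_1, ..., n_k and m_1, ..., m_k be nonnegative integers with 0 ≤ m_i ≤ n_i for all i, N = sum n_i ≥ 1, N' = sum m_i ≥ 1. Then N - (sum_i n_i^2)/N ≥ N' - (sum_i m_i^2)/N'. Equivalently, with p_i = n_i/N and q_i = m_i/N', we have N·sum_i p_i(1-p_i) ≥ N'·sum_i q_i(1-q_i). -/
/-!
Write `N = ∑ xᵢ` and `S = ∑ xᵢ²`. Raising `x` to `x + d` with `d ≥ 0`, `D = ∑ dᵢ`, the claim
`(S + 2⟪x, d⟫ + ∑ dᵢ²) / (N + D) ≤ S / N + D` clears to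
`2 N ⟪x, d⟫ + N ∑ dᵢ² ≤ D (S + N²) + N D²`. Here `∑ dᵢ² ≤ D²`, and each coordinate satisfies
`2 N xᵢ ≤ xᵢ² + N² ≤ S + N²`, so averaging against the weights `dᵢ` gives `2 N ⟪x, d⟫ ≤ D (S + N²)`.
-/

open Finset

namespace Spread

variable {ι : Type*} [Fintype ι]

/-- Equals `N · ∑ pᵢ (1 - pᵢ)` for `N = ∑ xᵢ` and the proportions `pᵢ = xᵢ / N`. -/
noncomputable def spread (x : ι → ℝ) : ℝ :=
  ∑ i, x i - (∑ i, x i ^ 2) / ∑ i, x i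

lemma two_mul_sum_mul_le (x : ι → ℝ) (j : ι) :
    2 * (∑ i, x i) * x j ≤ ∑ i, x i ^ 2 + (∑ i, x i) ^ 2 := by
  have hj : x j ^ 2 ≤ ∑ i, x i ^ 2 :=
    single_le_sum (f := fun i => x i ^ 2) (fun i _ => sq_nonneg (x i)) (mem_univ j)
  nlinarith [sq_nonneg (x j - ∑ i, x i)]

lemma two_mul_sum_mul_inner_le (x d : ι → ℝ) (hd : 0 ≤ d) :
    2 * (∑ i, x i) * ∑ i, x i * d i ≤ (∑ i, d i) * (∑ i, x i ^ 2 + (∑ i, x i) ^ 2) := by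
  rw [mul_sum, sum_mul]
  refine sum_le_sum fun j _ => ?_
  calc 2 * (∑ i, x i) * (x j * d j) = (2 * (∑ i, x i) * x j) * d j := by ring
    _ ≤ (∑ i, x i ^ 2 + (∑ i, x i) ^ 2) * d j :=
        mul_le_mul_of_nonneg_right (two_mul_sum_mul_le x j) (hd j)
    _ = d j * (∑ i, x i ^ 2 + (∑ i, x i) ^ 2) := mul_comm _ _

lemma spread_le_spread_add (x d : ι → ℝ) (hd : 0 ≤ d) (hx : 0 < ∑ i, x i) :
    spread x ≤ spread (x + d) := by
  set N := ∑ i, x i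
  set S := ∑ i, x i ^ 2
  set D := ∑ i, d i
  have hD : 0 ≤ D := sum_nonneg fun i _ => hd i
  have hsum : ∑ i, (x + d) i = N + D := sum_add_distrib
  have hsq : ∑ i, (x + d) i ^ 2 = S + 2 * ∑ i, x i * d i + ∑ i, d i ^ 2 := by
    simp only [Pi.add_apply, add_sq, sum_add_distrib, ← mul_sum, mul_assoc]
    rfl
  have hdd : ∑ i, d i ^ 2 ≤ D ^ 2 := sum_sq_le_sq_sum_of_nonneg fun i _ => hd i
  have hinner := two_mul_sum_mul_inner_le x d hd
  have hcleared : (S + 2 * ∑ i, x i * d i + ∑ i, d i ^ 2) * N ≤ (S + N * D) * (N + D) := by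
    nlinarith [mul_le_mul_of_nonneg_left hdd hx.le]
  have hquot : (S + 2 * ∑ i, x i * d i + ∑ i, d i ^ 2) / (N + D) ≤ S / N + D := by
    rw [show S / N + D = (S + N * D) / N by field_simp]
    exact (div_le_div_iff₀ (by linarith) hx).2 hcleared
  simp only [spread, hsum, hsq]
  linarith

theorem spread_mono {x y : ι → ℝ} (hxy : x ≤ y) (hx : 0 < ∑ i, x i) :
    spread x ≤ spread y := by
  simpa using spread_le_spread_add x (y - x) (sub_nonneg.2 hxy) hx

end Spread

theorem stmt7_general (k : ℕ) (n m : Fin k → ℕ) (hle : ∀ i, m i ≤ n i)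
    (hN' : 1 ≤ ∑ i, m i) :
    (∑ i, (m i : ℝ)) - (∑ i, (m i : ℝ) ^ 2) / (∑ i, (m i : ℝ))
      ≤ (∑ i, (n i : ℝ)) - (∑ i, (n i : ℝ) ^ 2) / (∑ i, (n i : ℝ)) := by
  have hm : 0 < ∑ i, (m i : ℝ) := by exact_mod_cast hN'
  exact Spread.spread_mono (fun i => Nat.cast_le.2 (hle i)) hm

/-- Key adaptive-submodularity inequality: for counts `m ≤ n` componentwise with
positive totals `N' = ∑ mᵢ` and `N = ∑ nᵢ`,
`N' - (∑ mᵢ²)/N' ≤ N - (∑ nᵢ²)/N`. -/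
theorem stmt7 (k : ℕ) (n m : Fin k → ℕ) (hle : ∀ i, m i ≤ n i)
    (hN : 1 ≤ ∑ i, n i) (hN' : 1 ≤ ∑ i, m i) :
    (∑ i, (m i : ℝ)) - (∑ i, (m i : ℝ) ^ 2) / (∑ i, (m i : ℝ))
      ≤ (∑ i, (n i : ℝ)) - (∑ i, (n i : ℝ) ^ 2) / (∑ i, (n i : ℝ)) :=
  stmt7_general k n m hle hN'
end

section
/- Fix a probability vector p ∈ ℝ^k with p_i > 0 for all i. Define f(α) = (sum_{i≠j} p_i α_i p_j α_j) / (sum_i p_i α_i) for α ∈ (0,1]^k. Then f is coordinatewise nondecreasing: the partial derivative of f with respect to each α_i is nonnegative on (0,1]^k. -/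
lemma stmt8_deriv_aux (a c d x : ℝ) (ha : 0 < a) (hc : 0 < c) (hd : 0 ≤ d)
    (hx : 0 < x) :
    0 ≤ deriv (fun t => ((c + a * t) ^ 2 - (d + (a * t) ^ 2)) / (c + a * t)) x := by
  have hZ : 0 < c + a * x := by positivity
  have h1 : HasDerivAt (fun t : ℝ => c + a * t) a x := by
    simpa using (hasDerivAt_id x).const_mul a
  have h2 : HasDerivAt (fun t : ℝ => a * t) a x := by
    simpa using (hasDerivAt_id x).const_mul a
  have hN : HasDerivAt (fun t => (c + a * t) ^ 2 - (d + (a * t) ^ 2))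
      (2 * (c + a * x) * a - 2 * (a * x) * a) x := by
    have := (h1.pow 2).sub ((hasDerivAt_const x d).add (h2.pow 2))
    refine this.congr_deriv ?_
    norm_num
  have hg := hN.div h1 hZ.ne'
  rw [(show HasDerivAt (fun t => ((c + a * t) ^ 2 - (d + (a * t) ^ 2)) / (c + a * t)) _ x from hg).deriv]
  apply div_nonneg _ (by positivity)
  have h3 : (2 * (c + a * x) * a - 2 * (a * x) * a) * (c + a * x)
      - ((c + a * x) ^ 2 - (d + (a * x) ^ 2)) * a = a * (c ^ 2 + d) := by ring
  rw [h3]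
  positivity

lemma stmt8_mono_aux (a c d s t : ℝ) (ha : 0 < a) (hc : 0 < c) (hd : 0 ≤ d)
    (hs : 0 < s) (hst : s ≤ t) :
    ((c + a * s) ^ 2 - (d + (a * s) ^ 2)) / (c + a * s)
      ≤ ((c + a * t) ^ 2 - (d + (a * t) ^ 2)) / (c + a * t) := by
  have ht : 0 < t := lt_of_lt_of_le hs hst
  have hZs : 0 < c + a * s := by positivity
  have hZt : 0 < c + a * t := by positivity
  rw [div_le_div_iff₀ hZs hZt]
  have hid : ((c + a * t) ^ 2 - (d + (a * t) ^ 2)) * (c + a * s)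
      - ((c + a * s) ^ 2 - (d + (a * s) ^ 2)) * (c + a * t)
      = a * (t - s) * (c ^ 2 + d) := by ring
  have hpos : 0 ≤ a * (t - s) * (c ^ 2 + d) :=
    mul_nonneg (mul_nonneg ha.le (sub_nonneg.2 hst)) (by positivity)
  linarith [hid, hpos]

/-- For a strictly positive probability vector `p`, the function
`f(α) = (Z(α)² - ∑ (pᵢαᵢ)²)/Z(α)` with `Z(α) = ∑ pᵢαᵢ` is coordinatewise
nondecreasing on `(0,1]^k`: each partial derivative is nonnegative there. -/
theorem stmt8 (k : ℕ) (hk : 2 ≤ k) (p : Fin k → ℝ) (hp : ∀ i, 0 < p i)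
    (hsum : ∑ i, p i = 1)
    (f : (Fin k → ℝ) → ℝ)
    (hf : ∀ α, f α =
      ((∑ i, p i * α i) ^ 2 - ∑ i, (p i * α i) ^ 2) / (∑ i, p i * α i)) :
    ∀ α : Fin k → ℝ, (∀ i, 0 < α i ∧ α i ≤ 1) →
      (∀ i : Fin k, 0 ≤ deriv (fun t => f (Function.update α i t)) (α i)) ∧
      (∀ (i : Fin k) (s t : ℝ), 0 < s → s ≤ t → t ≤ 1 →
        f (Function.update α i s) ≤ f (Function.update α i t)) := by
  intro α hα
  -- setup per coordinate
  have key : ∀ i : Fin k, ∃ c d : ℝ, 0 < c ∧ 0 ≤ d ∧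
      ∀ t : ℝ, f (Function.update α i t)
        = ((c + p i * t) ^ 2 - (d + (p i * t) ^ 2)) / (c + p i * t) := by
    intro i
    refine ⟨∑ j ∈ Finset.univ.erase i, p j * α j,
      ∑ j ∈ Finset.univ.erase i, (p j * α j) ^ 2, ?_, ?_, ?_⟩
    · have hne : (Finset.univ.erase i).Nonempty := by
        obtain ⟨j, hj⟩ := Fintype.exists_ne_of_one_lt_card
          (by simp; omega : 1 < Fintype.card (Fin k)) i
        exact ⟨j, Finset.mem_erase.2 ⟨hj, Finset.mem_univ j⟩⟩
      exact Finset.sum_pos (fun j _ => mul_pos (hp j) (hα j).1) hne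
    · exact Finset.sum_nonneg fun j _ => sq_nonneg _
    · intro t
      have e1 : ∑ j, p j * Function.update α i t j
          = (∑ j ∈ Finset.univ.erase i, p j * α j) + p i * t := by
        rw [← Finset.sum_erase_add _ _ (Finset.mem_univ i), Function.update_self]
        congr 1
        exact Finset.sum_congr rfl fun j hj => by
          rw [Function.update_of_ne (Finset.ne_of_mem_erase hj)]
      have e2 : ∑ j, (p j * Function.update α i t j) ^ 2
          = (∑ j ∈ Finset.univ.erase i, (p j * α j) ^ 2) + (p i * t) ^ 2 := by
        rw [← Finset.sum_erase_add _ _ (Finset.mem_univ i), Function.update_self]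
        congr 1
        exact Finset.sum_congr rfl fun j hj => by
          rw [Function.update_of_ne (Finset.ne_of_mem_erase hj)]
      rw [hf, e1, e2]
  constructor
  · intro i
    obtain ⟨c, d, hc, hd, hg⟩ := key i
    have : (fun t => f (Function.update α i t))
        = fun t => ((c + p i * t) ^ 2 - (d + (p i * t) ^ 2)) / (c + p i * t) :=
      funext hg
    rw [this]
    exact stmt8_deriv_aux (p i) c d (α i) (hp i) hc hd (hα i).1
  · intro i s t hs hst _
    obtain ⟨c, d, hc, hd, hg⟩ := key i
    rw [hg s, hg t]
    exact stmt8_mono_aux (p i) c d s t (hp i) hc hd hs hst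
end

section
/- Let p = (p_1, ..., p_k) be a probability vector and α ∈ [0,1]^k with Z := sum_i p_i α_i > 0. Then sum_{i≠j} p_i α_i p_j α_j / Z ≤ sum_{i≠j} p_i p_j / 1 whenever α is replaced coordinatewise by the all-ones vector; that is, (Z^2 − sum_i (p_i α_i)^2)/Z ≤ 1 − sum_i p_i^2. -/
/-!
The map `x ↦ ((∑ xᵢ)² - ∑ xᵢ²) / ∑ xᵢ = ∑_{i≠j} xᵢxⱼ / ∑ xᵢ` is monotone on the nonnegative
orthant (where `∑ xᵢ > 0`): writing `S = ∑ xᵢ`, its partial derivative in `xᵢ` is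
`((S - xᵢ)² + ∑_{j≠i} xⱼ²) / S² ≥ 0`. Since `pᵢαᵢ ≤ pᵢ` coordinatewise and `∑ pᵢ = 1`,
the value at `p ⊙ α` is at most the value at `p`, which is `1 - ∑ pᵢ²`.
-/

open Finset

namespace Finset

variable {ι : Type*} {s : Finset ι} {x y : ι → ℝ}

/-- With `d = y - x`, the difference of the two sides is
`∑ dᵢ (S² + ∑ xⱼ² - 2 S xᵢ) + S ((∑ dᵢ)² - ∑ dᵢ²)`, and `S² + ∑ xⱼ² - 2 S xᵢ ≥ (S - xᵢ)²`. -/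
theorem sq_sum_sub_sum_sq_mul_sum_le (hx : ∀ i ∈ s, 0 ≤ x i) (hxy : ∀ i ∈ s, x i ≤ y i) :
    ((∑ i ∈ s, x i) ^ 2 - ∑ i ∈ s, x i ^ 2) * ∑ i ∈ s, y i
      ≤ ((∑ i ∈ s, y i) ^ 2 - ∑ i ∈ s, y i ^ 2) * ∑ i ∈ s, x i := by
  set S := ∑ i ∈ s, x i
  set X2 := ∑ i ∈ s, x i ^ 2
  have hd : ∀ i ∈ s, 0 ≤ y i - x i := fun i hi => sub_nonneg.mpr (hxy i hi)
  have hS : 0 ≤ S := sum_nonneg hx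
  have hcross : ∀ i ∈ s, 0 ≤ (y i - x i) * (S ^ 2 + X2 - 2 * S * x i) := by
    intro i hi
    have : x i ^ 2 ≤ X2 := single_le_sum (f := fun j => x j ^ 2) (fun j _ => sq_nonneg _) hi
    exact mul_nonneg (hd i hi) (by nlinarith [sq_nonneg (S - x i)])
  have hsq : ∑ i ∈ s, (y i - x i) ^ 2 ≤ (∑ i ∈ s, (y i - x i)) ^ 2 :=
    sum_sq_le_sq_sum_of_nonneg hd
  have hT : ∑ i ∈ s, y i = S + ∑ i ∈ s, (y i - x i) := by rw [← sum_add_distrib]; simp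
  have hY2 : ∑ i ∈ s, y i ^ 2
      = X2 + 2 * ∑ i ∈ s, x i * (y i - x i) + ∑ i ∈ s, (y i - x i) ^ 2 := by
    rw [mul_sum, ← sum_add_distrib, ← sum_add_distrib]
    exact sum_congr rfl fun i _ => by ring
  have hlin : ∑ i ∈ s, (y i - x i) * (S ^ 2 + X2 - 2 * S * x i)
      = (S ^ 2 + X2) * ∑ i ∈ s, (y i - x i) - 2 * S * ∑ i ∈ s, x i * (y i - x i) := by
    rw [mul_sum, mul_sum, mul_sum, ← sum_sub_distrib]
    exact sum_congr rfl fun i _ => by ring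
  have hcross_sum := sum_nonneg hcross
  rw [hlin] at hcross_sum
  rw [hT, hY2]
  linear_combination hcross_sum + S * (sub_nonneg.mpr hsq)

theorem sq_sum_sub_sum_sq_div_sum_le (hx : ∀ i ∈ s, 0 ≤ x i) (hxy : ∀ i ∈ s, x i ≤ y i)
    (hS : 0 < ∑ i ∈ s, x i) :
    ((∑ i ∈ s, x i) ^ 2 - ∑ i ∈ s, x i ^ 2) / ∑ i ∈ s, x i
      ≤ ((∑ i ∈ s, y i) ^ 2 - ∑ i ∈ s, y i ^ 2) / ∑ i ∈ s, y i := by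
  have hT : 0 < ∑ i ∈ s, y i := hS.trans_le (sum_le_sum hxy)
  rw [div_le_div_iff₀ hS hT]
  exact sq_sum_sub_sum_sq_mul_sum_le hx hxy

end Finset

/-- For a probability vector `p` and `α ∈ [0,1]^k` with `Z = ∑ pᵢαᵢ > 0`:
`(Z² - ∑ (pᵢαᵢ)²)/Z ≤ 1 - ∑ pᵢ²`, i.e. the conditional marginal benefit at `α`
is at most its value at `α = 1`. -/
theorem stmt17 (k : ℕ) (p α : Fin k → ℝ)
    (hp : ∀ i, 0 ≤ p i) (hsum : ∑ i, p i = 1)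
    (hα : ∀ i, 0 ≤ α i ∧ α i ≤ 1) (hZ : 0 < ∑ i, p i * α i) :
    ((∑ i, p i * α i) ^ 2 - ∑ i, (p i * α i) ^ 2) / (∑ i, p i * α i)
      ≤ 1 - ∑ i, (p i) ^ 2 := by
  have hpα : ∀ i ∈ univ, p i * α i ≤ p i := fun i _ => mul_le_of_le_one_right (hp i) (hα i).2
  have hmono := sq_sum_sub_sum_sq_div_sum_le (fun i _ => mul_nonneg (hp i) (hα i).1) hpα hZ
  rwa [hsum, one_pow, div_one] at hmono
end
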